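/- Let t be a Mockingbird term and let s, s' be terms with t ≼ s, t ≼ s', and s ≠ s'. Then s ⇒ s' if and only if fr(s) ⋖ fr(s'). -/

import Mathlib

/-- Mockingbird terms: the constant `M`, variables `x i`, and applications. -/
inductive MTerm : Type
  | M : MTerm
  | var : ℕ → MTerm
  | app : MTerm → MTerm → MTerm
  deriving DecidableEq

/-- The one-step rewrite relation `⇒` on Mockingbird terms. -/
inductive Step : MTerm → MTerm → Prop
  | mock (t : MTerm) : Step (MTerm.app MTerm.M t) (MTerm.app t t)
  | left {t1 t1' : MTerm} (t2 : MTerm) :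
      Step t1 t1' → Step (MTerm.app t1 t2) (MTerm.app t1' t2)
  | right (t1 : MTerm) {t2 t2' : MTerm} :
      Step t2 t2' → Step (MTerm.app t1 t2) (MTerm.app t1 t2')

/-- `≼`, the reflexive-transitive closure of `⇒`. -/
def MLe : MTerm → MTerm → Prop := Relation.ReflTransGen Step

/-- `≡`, the reflexive-symmetric-transitive closure of `⇒`. -/
def MEquiv : MTerm → MTerm → Prop := Relation.EqvGen Step

/-- Strict version of `≼`. -/
def MLt (s t : MTerm) : Prop := MLe s t ∧ s ≠ t

/-- Covering relation for `≼`. -/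
def MCovBy (s t : MTerm) : Prop := MLt s t ∧ ∀ z, MLt s z → ¬ MLt z t

/-- Duplicative trees: white or black nodes with a list (forest) of children. -/
inductive DTree : Type
  | W : List DTree → DTree
  | B : List DTree → DTree

/-- The one-step relation `⋖` on duplicative forests. -/
inductive DStep : List DTree → List DTree → Prop
  | dup (g : List DTree) : DStep [DTree.W g] [DTree.B (g ++ g)]
  | white {g g' : List DTree} : DStep g g' → DStep [DTree.W g] [DTree.W g']
  | black {g g' : List DTree} : DStep g g' → DStep [DTree.B g] [DTree.B g']
  | head {t t' : DTree} (f : List DTree) : DStep [t] [t'] → DStep (t :: f) (t' :: f)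
  | tail (t : DTree) {f f' : List DTree} : DStep f f' → DStep (t :: f) (t :: f')

/-- `≪`, the reflexive-transitive closure of `⋖`. -/
def DLe : List DTree → List DTree → Prop := Relation.ReflTransGen DStep

/-- The map `fr` from Mockingbird terms to duplicative forests. -/
def fr : MTerm → List DTree
  | MTerm.M => []
  | MTerm.var _ => []
  | MTerm.app MTerm.M MTerm.M => [DTree.B []]
  | MTerm.app MTerm.M t' => [DTree.W (fr t')]
  | MTerm.app t t' => [DTree.B (fr t ++ fr t')]

mutual
  /-- The pruning map on duplicative trees (returns a forest). -/
  def prT : DTree → List DTree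
    | DTree.W g => [DTree.W (prF g)]
    | DTree.B g => prF g
  /-- The pruning map on duplicative forests. -/
  def prF : List DTree → List DTree
    | [] => []
    | t :: f => prT t ++ prF f
end

mutual
  /-- The statistic `mtStat` on duplicative trees. -/
  def mtStat : DTree → ℕ
    | DTree.W g => 2 * ml g
    | DTree.B g => ml g
  /-- Sum of `mtStat` over the trees of a forest. -/
  def mtsum : List DTree → ℕ
    | [] => 0
    | t :: f => mtStat t + mtsum f
  /-- The statistic `ml` on duplicative forests: `1 - ℓ + Σ mtStat`. -/
  def ml : List DTree → ℕ
    | f => mtsum f + 1 - f.length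
end

mutual
  /-- Number of white nodes in a duplicative tree. -/
  def whitesT : DTree → ℕ
    | DTree.W g => 1 + whitesF g
    | DTree.B g => whitesF g
  /-- Number of white nodes in a duplicative forest. -/
  def whitesF : List DTree → ℕ
    | [] => 0
    | t :: f => whitesT t + whitesF f
end

/-- Closed terms: no variables. -/
def MClosed : MTerm → Prop
  | MTerm.M => True
  | MTerm.var _ => False
  | MTerm.app a b => MClosed a ∧ MClosed b

/-- Degree: number of applications. -/
def deg : MTerm → ℕ
  | MTerm.M => 0
  | MTerm.var _ => 0
  | MTerm.app a b => deg a + deg b + 1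

/-- Subterm relation. -/
inductive Subterm : MTerm → MTerm → Prop
  | refl (t : MTerm) : Subterm t t
  | left {s a : MTerm} (b : MTerm) : Subterm s a → Subterm s (MTerm.app a b)
  | right (a : MTerm) {s b : MTerm} : Subterm s b → Subterm s (MTerm.app a b)

/-- The term `r_d`. -/
def rTerm : ℕ → MTerm
  | 0 => MTerm.M
  | d + 1 => MTerm.app MTerm.M (rTerm d)

/-- Saturated chain from `a` to `b`, given as the list of its elements. -/
def SatChain (a b : MTerm) (c : List MTerm) : Prop :=
  List.Chain' MCovBy c ∧ c.head? = some a ∧ c.getLast? = some b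

/-!
`fr` keeps the shape of a term, turning each `M ⋆ u` with `u ≠ M` into a white node, so every
non-trivial `⇒`-step becomes a `⋖`-step at the corresponding node (a mock step duplicates the
children of a white node). Conversely, every `⋖`-step out of `fr s` is the image of a `⇒`-step
out of `s`, and `fr` is injective on the terms above a fixed `t`, because `t` determines the leaves
(`M` or which variable) that `fr` forgets.
-/

open MTerm DTree

lemma fr_M_app {b : MTerm} (hb : b ≠ M) : fr (app M b) = [W (fr b)] := by
  cases b <;> first | rfl | exact absurd rfl hb

lemma fr_app_of_ne_M {a : MTerm} (b : MTerm) (ha : a ≠ M) :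
    fr (app a b) = [B (fr a ++ fr b)] := by
  cases a <;> first | rfl | exact absurd rfl ha

lemma length_fr_app (a b : MTerm) : (fr (app a b)).length = 1 := by
  by_cases ha : a = M
  · by_cases hb : b = M
    · subst ha hb; rfl
    · rw [ha, fr_M_app hb]; rfl
  · rw [fr_app_of_ne_M b ha]; rfl

namespace Step

lemma src_ne_M {u v : MTerm} (h : Step u v) : u ≠ M := by
  cases h <;> nofun

lemma tgt_ne_M {u v : MTerm} (h : Step u v) : v ≠ M := by
  cases h <;> nofun

lemma length_fr_eq {u v : MTerm} (h : Step u v) : (fr v).length = (fr u).length := by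
  cases h <;> simp only [length_fr_app]

end Step

namespace MLe

lemma eq_of_normal {u v : MTerm} (h : MLe u v) (hu : ∀ w, ¬ Step u w) : v = u :=
  (Relation.reflTransGen_iff_eq hu).1 h

lemma eq_of_not_step_to {u v : MTerm} (h : MLe u v) (hv : ∀ w, ¬ Step w v) : u = v := by
  rcases Relation.ReflTransGen.cases_tail h with rfl | ⟨w, -, hw⟩
  · rfl
  · exact absurd hw (hv w)

lemma eq_of_M_le {u : MTerm} (h : MLe M u) : u = M :=
  h.eq_of_normal (by rintro _ ⟨⟩)

lemma eq_of_le_M {u : MTerm} (h : MLe u M) : u = M :=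
  h.eq_of_not_step_to (by rintro _ ⟨⟩)

lemma eq_of_var_le {i : ℕ} {u : MTerm} (h : MLe (var i) u) : u = var i :=
  h.eq_of_normal (by rintro _ ⟨⟩)

lemma eq_of_le_var {i : ℕ} {u : MTerm} (h : MLe u (var i)) : u = var i :=
  h.eq_of_not_step_to (by rintro _ ⟨⟩)

lemma eq_M_iff {r u u' : MTerm} (h : MLe r u) (h' : MLe r u') : u = M ↔ u' = M := by
  constructor
  · rintro rfl; rw [h.eq_of_le_M] at h'; exact h'.eq_of_M_le
  · rintro rfl; rw [h'.eq_of_le_M] at h; exact h.eq_of_M_le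

lemma length_fr_eq {u v : MTerm} (h : MLe u v) : (fr v).length = (fr u).length := by
  induction h with
  | refl => rfl
  | tail _ hstep ih => rw [hstep.length_fr_eq, ih]

lemma app_inv {t1 t2 u : MTerm} (h : MLe (app t1 t2) u) :
    ∃ a b, u = app a b ∧ MLe t2 b ∧ (MLe t1 a ∨ t1 = M ∧ MLe t2 a) := by
  induction h with
  | refl => exact ⟨t1, t2, rfl, .refl, .inl .refl⟩
  | tail _ hstep ih =>
    obtain ⟨a, b, rfl, hb, ha⟩ := ih
    cases hstep with
    | mock =>
      have ht1 : t1 = M := ha.elim eq_of_le_M And.left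
      exact ⟨b, b, rfl, hb, .inr ⟨ht1, hb⟩⟩
    | left _ hstep =>
      refine ⟨_, b, rfl, hb, ?_⟩
      rcases ha with ha | ⟨ht1, ha⟩
      · exact .inl (.tail ha hstep)
      · exact .inr ⟨ht1, .tail ha hstep⟩
    | right _ hstep => exact ⟨a, _, rfl, .tail hb hstep, ha⟩

lemma app_app_inv {t1 t2 a b : MTerm} (h : MLe (app t1 t2) (app a b)) :
    MLe t2 b ∧ (MLe t1 a ∨ t1 = M ∧ MLe t2 a) := by
  obtain ⟨_, _, he, hab⟩ := h.app_inv
  cases he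
  exact hab

/-- A left subterm other than `M` lies above `t1`, or above `t2` once `t1 = M` was duplicated. -/
lemma le_left_of_le_app {t1 t2 a b : MTerm} (h : MLe (app t1 t2) (app a b)) (ha : a ≠ M) :
    MLe (if t1 = M then t2 else t1) a := by
  rcases h.app_app_inv.2 with h1 | ⟨ht1, h2⟩
  · have ht1 : t1 ≠ M := by rintro rfl; exact ha h1.eq_of_M_le
    rwa [if_neg ht1]
  · rwa [if_pos ht1]

end MLe

lemma eq_M_of_fr_eq {t1 t2 a b b' : MTerm} (h : MLe (app t1 t2) (app a b))
    (h' : MLe (app t1 t2) (app M b')) (hfr : fr (app a b) = fr (app M b')) : a = M := by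
  by_contra ha
  have hb' : b' = M := by
    by_contra hb'
    rw [fr_app_of_ne_M b ha, fr_M_app hb'] at hfr
    simp at hfr
  subst hb'
  obtain ⟨ht2, ht1⟩ := h'.app_app_inv
  have ht1 : t1 = M := ht1.elim MLe.eq_of_le_M And.left
  have hla := h.le_left_of_le_app ha
  rw [if_pos ht1, ht2.eq_of_le_M] at hla
  exact ha hla.eq_of_M_le

theorem eq_of_fr_eq_of_le {t s s' : MTerm} (hs : MLe t s) (hs' : MLe t s') (hfr : fr s = fr s') :
    s = s' := by
  induction s generalizing t s' with
  | M =>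
    obtain rfl := hs.eq_of_le_M
    exact hs'.eq_of_M_le.symm
  | var i =>
    obtain rfl := hs.eq_of_le_var
    exact hs'.eq_of_var_le.symm
  | app a b iha ihb =>
    obtain ⟨t1, t2, rfl⟩ : ∃ t1 t2, t = app t1 t2 := by
      cases t with
      | M => cases hs.eq_of_M_le
      | var i => cases hs.eq_of_var_le
      | app t1 t2 => exact ⟨t1, t2, rfl⟩
    obtain ⟨a', b', rfl, hb', -⟩ := hs'.app_inv
    have hb := hs.app_app_inv.1
    by_cases haM : a = M
    · subst haM
      obtain rfl : a' = M := eq_M_of_fr_eq hs' hs hfr.symm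
      by_cases hbM : b = M
      · rw [hbM, (hb.eq_M_iff hb').1 hbM]
      · rw [fr_M_app hbM, fr_M_app (mt (hb.eq_M_iff hb').2 hbM)] at hfr
        simp only [List.cons.injEq, W.injEq, and_true] at hfr
        rw [ihb hb hb' hfr]
    · have ha'M : a' ≠ M := by
        rintro rfl; exact haM (eq_M_of_fr_eq hs hs' hfr)
      have ha := hs.le_left_of_le_app haM
      have ha' := hs'.le_left_of_le_app ha'M
      rw [fr_app_of_ne_M b haM, fr_app_of_ne_M b' ha'M] at hfr
      simp only [List.cons.injEq, B.injEq, and_true] at hfr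
      obtain ⟨hfa, hfb⟩ := List.append_inj hfr (by rw [ha.length_fr_eq, ha'.length_fr_eq])
      rw [iha ha ha' hfa, ihb hb hb' hfb]

namespace DStep

lemma not_nil_left {f : List DTree} : ¬ DStep [] f := nofun

lemma append_left (f : List DTree) {g g' : List DTree} (h : DStep g g') :
    DStep (f ++ g) (f ++ g') := by
  induction f with
  | nil => exact h
  | cons t f ih => exact .tail t ih

lemma append_right {f f' : List DTree} (h : DStep f f') (g : List DTree) :
    DStep (f ++ g) (f' ++ g) := by
  induction h with
  | dup g0 => exact .head g (.dup g0)
  | white h _ => exact .head g (.white h)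
  | black h _ => exact .head g (.black h)
  | head f h _ => exact .head (f ++ g) h
  | tail t _ ih => exact .tail t ih

lemma cons_inv {t : DTree} {f h : List DTree} (hd : DStep (t :: f) h) :
    (∃ t', DStep [t] [t'] ∧ h = t' :: f) ∨ (∃ f', DStep f f' ∧ h = t :: f') := by
  cases hd with
  | dup g => exact .inl ⟨_, .dup g, rfl⟩
  | white h' => exact .inl ⟨_, .white h', rfl⟩
  | black h' => exact .inl ⟨_, .black h', rfl⟩
  | head f h' => exact .inl ⟨_, h', rfl⟩
  | tail t h' => exact .inr ⟨_, h', rfl⟩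

lemma append_inv (f1 : List DTree) {f2 h : List DTree} (hd : DStep (f1 ++ f2) h) :
    (∃ f1', DStep f1 f1' ∧ h = f1' ++ f2) ∨ (∃ f2', DStep f2 f2' ∧ h = f1 ++ f2') := by
  induction f1 generalizing h with
  | nil => exact .inr ⟨h, hd, rfl⟩
  | cons t f1 ih =>
    rcases cons_inv hd with ⟨t', ht', rfl⟩ | ⟨f', hf', rfl⟩
    · exact .inl ⟨t' :: f1, .head _ ht', rfl⟩
    · rcases ih hf' with ⟨f1', h1, rfl⟩ | ⟨f2', h2, rfl⟩
      · exact .inl ⟨t :: f1', .tail _ h1, rfl⟩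
      · exact .inr ⟨f2', h2, rfl⟩

lemma W_inv {g f' : List DTree} (h : DStep [W g] f') :
    f' = [B (g ++ g)] ∨ ∃ g', DStep g g' ∧ f' = [W g'] := by
  generalize e : [W g] = f at h
  induction h generalizing g with
  | dup => cases e; exact .inl rfl
  | white hg => cases e; exact .inr ⟨_, hg, rfl⟩
  | black => cases e
  | head f _ ih => cases e; exact ih rfl
  | tail t h => cases e; exact absurd h not_nil_left

lemma B_inv {g f' : List DTree} (h : DStep [B g] f') : ∃ g', DStep g g' ∧ f' = [B g'] := by
  generalize e : [B g] = f at h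
  induction h generalizing g with
  | dup => cases e
  | white => cases e
  | black hg => cases e; exact ⟨_, hg, rfl⟩
  | head f _ ih => cases e; exact ih rfl
  | tail t h => cases e; exact absurd h not_nil_left

end DStep

theorem Step.dstep_fr {s s' : MTerm} (h : Step s s') (hne : s ≠ s') : DStep (fr s) (fr s') := by
  induction h with
  | mock t =>
    have ht : t ≠ M := by rintro rfl; exact hne rfl
    rw [fr_M_app ht, fr_app_of_ne_M t ht]
    exact .dup _
  | left t2 h ih =>
    rw [fr_app_of_ne_M t2 h.src_ne_M, fr_app_of_ne_M t2 h.tgt_ne_M]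
    exact .black ((ih fun he => hne (he ▸ rfl)).append_right _)
  | right t1 h ih =>
    have hd := ih fun he => hne (he ▸ rfl)
    by_cases ht1 : t1 = M
    · subst ht1
      rw [fr_M_app h.src_ne_M, fr_M_app h.tgt_ne_M]
      exact .white hd
    · rw [fr_app_of_ne_M _ ht1, fr_app_of_ne_M _ ht1]
      exact .black (hd.append_left _)

theorem exists_step_of_dstep_fr {s : MTerm} {f' : List DTree} (h : DStep (fr s) f') :
    ∃ s', Step s s' ∧ fr s' = f' := by
  induction s generalizing f' with
  | M => exact absurd h DStep.not_nil_left
  | var => exact absurd h DStep.not_nil_left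
  | app a b iha ihb =>
    by_cases haM : a = M
    · subst haM
      by_cases hbM : b = M
      · subst hbM
        obtain ⟨_, hg, -⟩ := DStep.B_inv h
        exact absurd hg DStep.not_nil_left
      · rw [fr_M_app hbM] at h
        rcases h.W_inv with rfl | ⟨g', hg', rfl⟩
        · exact ⟨app b b, .mock b, fr_app_of_ne_M b hbM⟩
        · obtain ⟨b', hb', rfl⟩ := ihb hg'
          exact ⟨app M b', .right M hb', fr_M_app hb'.tgt_ne_M⟩
    · rw [fr_app_of_ne_M b haM] at h
      obtain ⟨g', hg', rfl⟩ := h.B_inv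
      rcases DStep.append_inv (fr a) hg' with ⟨fa', hfa, rfl⟩ | ⟨fb', hfb, rfl⟩
      · obtain ⟨a', ha', rfl⟩ := iha hfa
        exact ⟨app a' b, .left b ha', fr_app_of_ne_M b ha'.tgt_ne_M⟩
      · obtain ⟨b', hb', rfl⟩ := ihb hfb
        exact ⟨app a b', .right a hb', fr_app_of_ne_M b' haM⟩

/-- for `s, s'` above `t` with `s ≠ s'`, one has `s ⇒ s'` iff
`fr s ⋖ fr s'`. -/
theorem step_iff_dstep (t s s' : MTerm)
    (hs : MLe t s) (hs' : MLe t s') (hne : s ≠ s') :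
    Step s s' ↔ DStep (fr s) (fr s') := by
  refine ⟨fun h => h.dstep_fr hne, fun h => ?_⟩
  obtain ⟨s'', hstep, hfr⟩ := exists_step_of_dstep_fr h
  have hts'' : MLe t s'' := Relation.ReflTransGen.tail hs hstep
  rwa [eq_of_fr_eq_of_le hts'' hs' hfr] at hstep
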